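/- arXiv:1709.06543 — 2 statements merged into one kernel-verified Lean document; each statement's English description precedes it below -/
import Mathlib

section
/- Let $A$ be a commutative ring with $2$ invertible, $B$ a finite $A$-algebra such that $B$ is finitely generated projective as an $A$-module, and $q \in (B[\lambda])^\times$ an invertible element of $B \otimes_A A[\lambda]$ defining a family of rank-one quadratic forms on $B$ over the affine line. Then the quadratic spaces $(B, q_0)$ and $(B, q_1)$ over $A$ obtained by evaluating at $\lambda = 0$ and $\lambda = 1$ are isometric, where $(B, q_i)$ denotes $B$ with symmetric bilinear form $(a, b) \mapsto \tau(q_i \cdot a b)$ for any fixed $A$-linear functional $\tau : B \to A$ inducing nondegenerate forms. -/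
/-!
A unit of `B[λ]` has unit constant term and nilpotent higher coefficients, so `q(1) - q(0)` is
nilpotent. Newton's method for `q(0) X² - q(1)`, started at `1` (where the derivative `2 q(0)` is a
unit), yields a unit `u` with `q(1) = q(0) u²`, and multiplication by `u` is the isometry.
-/

open Polynomial

theorem Polynomial.isNilpotent_eval_sub_eval_zero_of_isUnit {R : Type*} [CommRing R] {P : R[X]}
    (hP : IsUnit P) (a : R) : IsNilpotent (P.eval a - P.eval 0) := by
  have hdecomp : P = C (P.eval 0) + X * (P /ₘ X) := by
    conv_lhs => rw [← modByMonic_add_div P X, modByMonic_X]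
  have hdiff : P.eval a - P.eval 0 = a * (P /ₘ X).eval a := by
    nth_rewrite 1 [hdecomp]
    simp
  rw [hdiff]
  exact (Commute.all _ _).isNilpotent_mul_left ((isUnit_iff'.mp hP).2.map (evalRingHom a))

theorem exists_mul_sq_eq_of_isNilpotent_sub {R : Type*} [CommRing R] (h2 : IsUnit (2 : R))
    {a b : R} (ha : IsUnit a) (hab : IsNilpotent (b - a)) : ∃ u : Rˣ, b = a * u ^ 2 := by
  have hP : IsNilpotent (aeval (1 : R) (C a * X ^ 2 - C b)) := by
    simpa only [coe_aeval_eq_eval, eval_sub, eval_mul, eval_C, eval_pow, eval_X, one_pow,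
      mul_one, ← neg_sub b a, isNilpotent_neg_iff] using hab
  have hP' : IsUnit (aeval (1 : R) (derivative (C a * X ^ 2 - C b))) := by
    simpa only [coe_aeval_eq_eval, derivative_sub, derivative_C_mul_X_sq, derivative_C, sub_zero,
      eval_mul, eval_C, eval_X, mul_one] using ha.mul h2
  obtain ⟨r, ⟨hr, hroot⟩, -⟩ := existsUnique_nilpotent_sub_and_aeval_eq_zero hP hP'
  have hr_unit : IsUnit r := by simpa using hr.isUnit_one_sub
  have hr_sq : a * r ^ 2 - b = 0 := by simpa [coe_aeval_eq_eval] using hroot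
  exact ⟨hr_unit.unit, (sub_eq_zero.mp hr_sq).symm⟩

theorem rank_one_forms_rigid_along_affine_line_general
    (A : Type) [CommRing A] [Invertible (2 : A)]
    (B : Type) [CommRing B] [Algebra A B]
    (q : (Polynomial B)ˣ)
    (τ : B →ₗ[A] A) :
    ∃ σ : B ≃ₗ[A] B, ∀ a b : B,
      τ ((q : Polynomial B).eval 0 * σ a * σ b)
        = τ ((q : Polynomial B).eval 1 * a * b) := by
  have h2 : IsUnit (2 : B) := by
    simpa only [map_ofNat] using (isUnit_of_invertible (2 : A)).map (algebraMap A B)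
  obtain ⟨u, hu⟩ := exists_mul_sq_eq_of_isNilpotent_sub h2
    (q.isUnit.map (evalRingHom 0)) (isNilpotent_eval_sub_eval_zero_of_isUnit q.isUnit 1)
  refine ⟨u.mulLeftLinearEquiv A B, fun a b => ?_⟩
  rw [hu, coe_evalRingHom, Units.mulLeftLinearEquiv_apply, Units.mulLeftLinearEquiv_apply]
  congr 1
  ring

/-- Rigidity of rank-one quadratic forms along the affine line: let `A` be a commutative
ring with `2` invertible, `B` a finite `A`-algebra which is finitely generated projective
as an `A`-module, and `q ∈ (B[λ])ˣ` an invertible element of `B[λ]`, viewed as a family of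
rank-one quadratic forms on `B` over `𝔸¹`.  Fix an `A`-linear functional `τ : B → A`
inducing nondegenerate forms for the evaluations `q₀ = q(0)` and `q₁ = q(1)`.  Then the
quadratic spaces `(B, (a,b) ↦ τ(q₀ a b))` and `(B, (a,b) ↦ τ(q₁ a b))` are isometric. -/
theorem rank_one_forms_rigid_along_affine_line
    (A : Type) [CommRing A] [Invertible (2 : A)]
    (B : Type) [CommRing B] [Algebra A B]
    [Module.Finite A B] [Module.Projective A B]
    (q : (Polynomial B)ˣ)
    (τ : B →ₗ[A] A)
    (hτ0 : Function.Bijective fun a : B =>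
      τ ∘ₗ LinearMap.mul A B ((q : Polynomial B).eval 0 * a))
    (hτ1 : Function.Bijective fun a : B =>
      τ ∘ₗ LinearMap.mul A B ((q : Polynomial B).eval 1 * a)) :
    ∃ σ : B ≃ₗ[A] B, ∀ a b : B,
      τ ((q : Polynomial B).eval 0 * σ a * σ b)
        = τ ((q : Polynomial B).eval 1 * a * b) :=
  rank_one_forms_rigid_along_affine_line_general A B q τ
end

section
/- Let $k$ be a field, $X$ a $k$-scheme with coordinate ring $k[X]$, and let $P$ be a module over $k[X](t)(u)$ (functions on $X \times \mathbb{G}_m \times \mathbb{G}_m$) that is finitely generated projective of constant rank $r$ over $k[X](t) = k[X \times \mathbb{G}_m]$, and on which multiplication by $u$ is invertible. Let $p(x) = x^r + b_{r-1}x^{r-1} + \cdots + b_0 \in k[X](t)[x]$ be the characteristic polynomial of multiplication by $u$. Then there exist integers $N$ and $M$ such that for all $n > N$, the element $\det_P(t^n - u) = p(t^n) \in k[X](t)$ equals $t^{-M} \cdot (t^m + a_{m-1}t^{m-1} + \cdots + a_0)$ where $m = rn + M$, the $a_i \in k[X]$, and $a_0 \in k[X]^\times$ is invertible. -/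
/-!
Write `p = ∑ bᵢ xⁱ` with `bᵢ ∈ A[T;T⁻¹]`. Since `u` is invertible, `b₀ = ± det u` is a unit, hence
`b₀ = c·Tᵉ` with `c ∈ Aˣ`. If all exponents occurring in the `bᵢ` lie in `[-B, B]` and `n > 2B`,
the term `bᵢ T^{in}` of `T⁻ᵉ p(Tⁿ)` has exponents in `[in - e - B, in - e + B]`: for `0 < i < r`
these lie strictly between `0` and `rn - e`, the term `i = r` is `T^{rn-e}` and the term `i = 0`
is `c`. So `T⁻ᵉ p(Tⁿ)` is a monic polynomial of degree `rn - e` with constant term `c`.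
-/

open Polynomial LaurentPolynomial

namespace LaurentPolynomial

variable {A : Type*}

theorem coeff_mul_T [Semiring A] (f : A[T;T⁻¹]) (s j : ℤ) :
    (f * T s).coeff j = f.coeff (j - s) := by
  simpa [sub_eq_add_neg] using AddMonoidAlgebra.coeff_mul_single_apply f (1 : A) s j

theorem coeff_C_mul_T [Semiring A] (c : A) (e j : ℤ) :
    (C c * T e : A[T;T⁻¹]).coeff j = if j = e then c else 0 := by
  rw [← single_eq_C_mul_T, AddMonoidAlgebra.coeff_single, Finsupp.single_apply]
  simp [eq_comm]

@[simp] theorem coeff_trunc [Semiring A] (L : A[T;T⁻¹]) (n : ℕ) :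
    (trunc L).coeff n = L.coeff n :=
  rfl

theorem coeff_toLaurent_natCast [Semiring A] (f : A[X]) (n : ℕ) :
    (toLaurent f).coeff n = f.coeff n := by
  rw [coeff_toLaurent]
  exact Finsupp.mapDomain_apply Nat.cast_injective _ n

theorem coeff_toLaurent_of_neg [Semiring A] (f : A[X]) {j : ℤ} (hj : j < 0) :
    (toLaurent f).coeff j = 0 := by
  rw [coeff_toLaurent]
  exact Finsupp.mapDomain_of_notMem_range _ _ (by rintro ⟨n, rfl⟩; simp at hj; omega)

theorem toLaurent_trunc [Semiring A] {L : A[T;T⁻¹]} (hL : ∀ j ∈ L.coeff.support, 0 ≤ j) :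
    toLaurent (trunc L) = L := by
  refine LaurentPolynomial.ext fun j => ?_
  rcases lt_or_ge j 0 with hj | hj
  · rw [coeff_toLaurent_of_neg _ hj, eq_comm, ← Finsupp.notMem_support_iff]
    exact fun h => (hL j h).not_gt hj
  · lift j to ℕ using hj
    rw [coeff_toLaurent_natCast, coeff_trunc]

theorem natDegree_trunc_le [Semiring A] {L : A[T;T⁻¹]} {m : ℕ}
    (hL : ∀ j ∈ L.coeff.support, j ≤ m) : (trunc L).natDegree ≤ m := by
  refine natDegree_le_iff_coeff_eq_zero.2 fun n hn => ?_
  rw [coeff_trunc, ← Finsupp.notMem_support_iff]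
  exact fun h => (hL n h).not_gt (by exact_mod_cast hn)

theorem monic_trunc [Semiring A] {L : A[T;T⁻¹]} {m : ℕ} (hL : ∀ j ∈ L.coeff.support, j ≤ m)
    (hm : L.coeff m = 1) : (trunc L).Monic :=
  monic_of_natDegree_le_of_coeff_eq_one m (natDegree_trunc_le hL) hm

theorem natDegree_trunc [Semiring A] [Nontrivial A] {L : A[T;T⁻¹]} {m : ℕ}
    (hL : ∀ j ∈ L.coeff.support, j ≤ m) (hm : L.coeff m = 1) : (trunc L).natDegree = m :=
  natDegree_eq_of_le_of_coeff_ne_zero (natDegree_trunc_le hL) (by simp [hm])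

theorem exists_eq_C_mul_T_of_isUnit [CommRing A] [IsDomain A] {w : A[T;T⁻¹]} (hw : IsUnit w) :
    ∃ c e, IsUnit c ∧ w = C c * T e := by
  obtain ⟨w, rfl⟩ := hw
  obtain ⟨m, f, hf⟩ := exists_T_pow (w : A[T;T⁻¹])
  obtain ⟨m', g, hg⟩ := exists_T_pow (↑w⁻¹ : A[T;T⁻¹])
  have hfg : f * g = X ^ (m + m') := toLaurent_injective <| by
    rw [map_mul, hf, hg, toLaurent_X_pow, mul_mul_mul_comm, w.mul_inv, one_mul, ← T_add]
    push_cast; rfl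
  -- `f ∣ Xᵏ` and `X` is prime, so `f` is a unit multiple of a power of `X`.
  obtain ⟨i, -, u, hu⟩ := (dvd_prime_pow prime_X _).1 ⟨g, hfg.symm⟩
  obtain ⟨c, hc, hcu⟩ := Polynomial.isUnit_iff.1 (u⁻¹).isUnit
  have hf' : f = X ^ i * Polynomial.C c := by rw [hcu, ← hu, Units.mul_inv_cancel_right]
  refine ⟨c, i - m, hc, ?_⟩
  calc (w : A[T;T⁻¹]) = (w : A[T;T⁻¹]) * T m * T (-m) := by
        rw [mul_T_assoc, add_neg_cancel, T_zero, mul_one]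
    _ = C c * T (i - m) := by
      rw [← hf, hf', map_mul, toLaurent_X_pow, toLaurent_C, T_sub, T_mul, mul_assoc]

theorem exists_coeff_coeff_eq_zero_of_lt_abs [Semiring A] (p : A[T;T⁻¹][X]) :
    ∃ B : ℕ, ∀ i j, (B : ℤ) < |j| → (p.coeff i).coeff j = 0 := by
  refine ⟨p.support.sup fun i => (p.coeff i).coeff.support.sup Int.natAbs, fun i j hj => ?_⟩
  by_contra h
  have hi : i ∈ p.support := mem_support_iff.2 fun h' => h (by rw [h']; rfl)
  have h1 := Finset.le_sup (f := Int.natAbs) (Finsupp.mem_support_iff.2 h)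
  have h2 := Finset.le_sup (f := fun i => (p.coeff i).coeff.support.sup Int.natAbs) hi
  rw [Int.abs_eq_natAbs] at hj
  omega

theorem coeff_T_mul_eval_T_pow [CommSemiring A] (p : A[T;T⁻¹][X]) (s : ℤ) (n : ℕ) (j : ℤ) :
    (T s * p.eval (T n)).coeff j =
      ∑ i ∈ Finset.range (p.natDegree + 1), (p.coeff i).coeff (j - (i * n + s)) := by
  rw [eval_eq_sum_range, Finset.mul_sum, AddMonoidAlgebra.coeff_sum, Finsupp.finsetSum_apply]
  refine Finset.sum_congr rfl fun i _ => ?_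
  rw [T_pow, T_mul, mul_assoc, ← T_add, coeff_mul_T]

theorem coeff_coeff_ne_zero_cases [Semiring A] {p : A[T;T⁻¹][X]} (hp : p.Monic) {B n : ℕ}
    (hB : ∀ i j, (B : ℤ) < |j| → (p.coeff i).coeff j = 0) (hn : 2 * B < n) {c : A} {M : ℤ}
    (h0 : p.coeff 0 = C c * T (-M)) (hM : |M| ≤ B) {i : ℕ} (hi : i ≤ p.natDegree) {j : ℤ}
    (hij : (p.coeff i).coeff (j - (i * n + M)) ≠ 0) :
    (i = 0 ∧ j = 0) ∨ (i = p.natDegree ∧ j = p.natDegree * n + M) ∨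
      (0 < j ∧ j < p.natDegree * n + M) := by
  rcases Nat.eq_zero_or_pos i with rfl | hi0
  · rw [h0, coeff_C_mul_T] at hij
    have := (ite_ne_right_iff.1 hij).1
    push_cast at this
    exact Or.inl ⟨rfl, by linarith⟩
  rcases hi.eq_or_lt with rfl | hir
  · rw [hp.coeff_natDegree, ← T_zero, T_apply] at hij
    have := (ite_ne_right_iff.1 hij).1
    exact Or.inr (Or.inl ⟨rfl, by linarith⟩)
  have hj : |j - (i * n + M)| ≤ B := not_lt.1 fun h => hij (hB i _ h)
  have h1 : n ≤ i * n := Nat.le_mul_of_pos_left n hi0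
  have h2 : (i + 1) * n ≤ p.natDegree * n := Nat.mul_le_mul_right n hir
  rw [abs_le] at hj hM
  exact Or.inr (Or.inr ⟨by linarith, by linarith⟩)

theorem exists_monic_toLaurent_eq_T_mul_eval_T_pow [CommRing A] [Nontrivial A]
    {p : A[T;T⁻¹][X]} (hp : p.Monic) (hr : 0 < p.natDegree) {B n : ℕ}
    (hB : ∀ i j, (B : ℤ) < |j| → (p.coeff i).coeff j = 0) (hn : 2 * B < n) {c : A} {M : ℤ}
    (h0 : p.coeff 0 = C c * T (-M)) (hM : |M| ≤ B) :
    ∃ q : A[X], q.Monic ∧ (q.natDegree : ℤ) = p.natDegree * n + M ∧ q.coeff 0 = c ∧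
      toLaurent q = T M * p.eval (T n) := by
  set L := T M * p.eval (T n) with hL
  have hcases := fun i hi j => coeff_coeff_ne_zero_cases hp hB hn h0 hM (i := i) hi (j := j)
  obtain ⟨m, hm⟩ : ∃ m : ℕ, (m : ℤ) = p.natDegree * n + M :=
    ⟨_, Int.toNat_of_nonneg (by rw [abs_le] at hM; nlinarith)⟩
  have hm0 : 0 < (m : ℤ) := by rw [hm, abs_le] at *; nlinarith
  have hsupp : ∀ j ∈ L.coeff.support, 0 ≤ j ∧ j ≤ m := by
    intro j hj
    rw [Finsupp.mem_support_iff, hL, coeff_T_mul_eval_T_pow] at hj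
    obtain ⟨i, hi, hij⟩ := Finset.exists_ne_zero_of_sum_ne_zero hj
    have := hcases i (Finset.mem_range_succ_iff.1 hi) j hij
    omega
  have htop : L.coeff m = 1 := by
    rw [hL, coeff_T_mul_eval_T_pow, Finset.sum_eq_single_of_mem _ (Finset.self_mem_range_succ _)]
    · rw [hp.coeff_natDegree, hm, sub_self, ← T_zero, T_apply, if_pos rfl]
    · intro i hi hir
      by_contra hij
      have := hcases i (Finset.mem_range_succ_iff.1 hi) m hij
      omega
  have hbot : L.coeff 0 = c := by
    rw [hL, coeff_T_mul_eval_T_pow, Finset.sum_eq_single_of_mem 0 (by simp)]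
    · rw [h0, coeff_C_mul_T, if_pos (by simp)]
    · intro i hi hi0
      by_contra hij
      have := hcases i (Finset.mem_range_succ_iff.1 hi) 0 hij
      omega
  refine ⟨trunc L, monic_trunc (fun j hj => (hsupp j hj).2) htop, ?_, ?_,
    toLaurent_trunc fun j hj => (hsupp j hj).1⟩
  · rw [natDegree_trunc (fun j hj => (hsupp j hj).2) htop, hm]
  · rw [coeff_trunc, Nat.cast_zero, hbot]

end LaurentPolynomial

open LaurentPolynomial in
theorem Polynomial.Monic.exists_eval_T_pow_eq {A : Type*} [CommRing A] [IsDomain A]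
    {p : A[T;T⁻¹][X]} (hp : p.Monic) (h0 : IsUnit (p.coeff 0)) :
    ∃ (N : ℕ) (M : ℤ), ∀ n > N, ∃ q : A[X], q.Monic ∧ (q.natDegree : ℤ) = p.natDegree * n + M ∧
      IsUnit (q.coeff 0) ∧ p.eval (T n) = T (-M) * toLaurent q := by
  rcases Nat.eq_zero_or_pos p.natDegree with hr | hr
  · rw [hp.natDegree_eq_zero.1 hr]
    exact ⟨0, 0, fun n _ => ⟨1, monic_one, by simp, by simp, by simp⟩⟩
  obtain ⟨c, e, hc, hce⟩ := exists_eq_C_mul_T_of_isUnit h0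
  obtain ⟨M, rfl⟩ : ∃ M, e = -M := ⟨-e, (neg_neg e).symm⟩
  obtain ⟨B, hB⟩ := exists_coeff_coeff_eq_zero_of_lt_abs p
  have hM : |M| ≤ B := by
    refine not_lt.1 fun h => hc.ne_zero ?_
    simpa [hce, coeff_C_mul_T] using hB 0 (-M) (by rwa [abs_neg])
  refine ⟨2 * B, M, fun n hn => ?_⟩
  obtain ⟨q, hq, hdeg, hq0, hqL⟩ := exists_monic_toLaurent_eq_T_mul_eval_T_pow hp hr hB hn hce hM
  refine ⟨q, hq, hdeg, hq0 ▸ hc, ?_⟩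
  rw [hqL, ← mul_assoc, ← T_add, neg_add_cancel, T_zero, one_mul]

theorem LinearMap.isUnit_charpoly_coeff_zero {R M : Type*} [CommRing R] [AddCommGroup M]
    [Module R M] [Module.Free R M] [Module.Finite R M] {f : M →ₗ[R] M}
    (hf : Function.Bijective f) : IsUnit (f.charpoly.coeff 0) := by
  have hdet := LinearMap.isUnit_det f ((Module.End.isUnit_iff f).2 hf)
  rw [LinearMap.det_eq_sign_charpoly_coeff] at hdet
  exact (IsUnit.mul_iff.1 hdet).2

theorem det_tn_sub_u_eventually_monic_general
    (A : Type) [CommRing A] [IsDomain A]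
    (r : ℕ)
    (P : Type) [AddCommGroup P]
    [Module (LaurentPolynomial (LaurentPolynomial A)) P]
    [Module (LaurentPolynomial A) P]
    [IsScalarTower (LaurentPolynomial A) (LaurentPolynomial (LaurentPolynomial A)) P]
    [Module.Free (LaurentPolynomial A) P] [Module.Finite (LaurentPolynomial A) P]
    (hr : Module.finrank (LaurentPolynomial A) P = r)
    (hu : Function.Bijective
      ((LinearMap.lsmul (LaurentPolynomial (LaurentPolynomial A)) P
          (LaurentPolynomial.T 1)).restrictScalars (LaurentPolynomial A))) :
    ∃ (N : ℕ) (M : ℤ), ∀ n : ℕ, n > N →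
      ∃ q : Polynomial A,
        q.Monic ∧
        (q.natDegree : ℤ) = (r : ℤ) * n + M ∧
        IsUnit (q.coeff 0) ∧
        Polynomial.eval (LaurentPolynomial.T (n : ℤ))
            (LinearMap.charpoly
              ((LinearMap.lsmul (LaurentPolynomial (LaurentPolynomial A)) P
                  (LaurentPolynomial.T 1)).restrictScalars (LaurentPolynomial A)))
          = LaurentPolynomial.T (-M) * Polynomial.toLaurent q := by
  have h := (LinearMap.charpoly_monic _).exists_eval_T_pow_eq
    (LinearMap.isUnit_charpoly_coeff_zero hu)
  rwa [LinearMap.charpoly_natDegree, hr] at h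

/-- Suslin-type lemma on `det_P(tⁿ - u)`: let `A = k[X]` (a domain) over a field `k`, let
`R = A[t,t⁻¹]` and `S = R[u,u⁻¹]` be the rings of functions on `X × 𝔾ₘ` and
`X × 𝔾ₘ × 𝔾ₘ`, and let `P` be an `S`-module which is finite free of rank `r` over `R`
and on which multiplication by `u` is invertible.  Let `p` be the characteristic
polynomial of multiplication by `u` over `R`.  Then there are `N : ℕ` and `M : ℤ` such
that for all `n > N`, `det_P(tⁿ - u) = p(tⁿ) = t⁻ᴹ·(tᵐ + a_{m-1}tᵐ⁻¹ + ⋯ + a₀)` with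
`m = r·n + M`, the `aᵢ ∈ A`, and `a₀ ∈ A` invertible. -/
theorem det_tn_sub_u_eventually_monic
    (k : Type) [Field k] (A : Type) [CommRing A] [IsDomain A] [Algebra k A]
    (r : ℕ)
    (P : Type) [AddCommGroup P]
    [Module (LaurentPolynomial (LaurentPolynomial A)) P]
    [Module (LaurentPolynomial A) P]
    [IsScalarTower (LaurentPolynomial A) (LaurentPolynomial (LaurentPolynomial A)) P]
    [Module.Free (LaurentPolynomial A) P] [Module.Finite (LaurentPolynomial A) P]
    (hr : Module.finrank (LaurentPolynomial A) P = r)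
    (hu : Function.Bijective
      ((LinearMap.lsmul (LaurentPolynomial (LaurentPolynomial A)) P
          (LaurentPolynomial.T 1)).restrictScalars (LaurentPolynomial A))) :
    ∃ (N : ℕ) (M : ℤ), ∀ n : ℕ, n > N →
      ∃ q : Polynomial A,
        q.Monic ∧
        (q.natDegree : ℤ) = (r : ℤ) * n + M ∧
        IsUnit (q.coeff 0) ∧
        Polynomial.eval (LaurentPolynomial.T (n : ℤ))
            (LinearMap.charpoly
              ((LinearMap.lsmul (LaurentPolynomial (LaurentPolynomial A)) P
                  (LaurentPolynomial.T 1)).restrictScalars (LaurentPolynomial A)))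
          = LaurentPolynomial.T (-M) * Polynomial.toLaurent q :=
  det_tn_sub_u_eventually_monic_general A r P hr hu
end
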